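/- Let S be a K-convex monotone semigroup on X with S(t)0 ≥ 0 for all t ≥ 0, where X is a topological vector space, P is a family of lattice seminorms on Y, and K is strongly right-continuous with respect to P (for every p ∈ P, every sequence t_n → 0 with t_n > 0, and every sequence u_n → u₀ in X, p(K(t_n)u_n − u₀) → 0). Then for every u₀ ∈ X, every t ≥ 0, every p ∈ P, and every sequence (h_n) ⊂ (0,∞) with h_n → 0, one has p(S(t + h_n)u₀ − S(t)u₀) → 0; that is, the trajectory s ↦ S(s)u₀ is right-continuous with respect to the seminorms in P. -/

import Mathlib

/-!
Write `v = S(t)u₀`, so that `S(t + h)u₀ = S(h)v`. Convexity with `λ = 0` gives `S(h)v ≤ K(h)v`,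
and with `λ = 1/2` applied to `0 = v/2 + (-v)/2`, together with `S(h)0 ≥ 0`, it gives
`-K(h)(-v) ≤ S(h)v`. Hence `S(h)v - v` is squeezed between `-(K(h)(-v) - (-v))` and
`K(h)v - v`, so for a lattice seminorm `p(S(h)v - v) ≤ p(K(h)v - v) + p(K(h)(-v) - (-v))`,
and both terms tend to `0` by strong right-continuity of `K` along constant sequences.
-/

open Filter Topology

section LatticeSeminorm

variable {Y : Type*} [Lattice Y] [AddCommGroup Y] [CovariantClass Y Y (· + ·) (· ≤ ·)]

lemma apply_le_add_of_neg_le_of_le (p : Y → ℝ)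
    (hadd : ∀ y z : Y, p (y + z) ≤ p y + p z)
    (hlat : ∀ y z : Y, y ⊔ (-y) ≤ z ⊔ (-z) → p y ≤ p z)
    {x y z : Y} (hxy : x ≤ y) (hzx : -z ≤ x) :
    p x ≤ p y + p z := by
  have hmono : ∀ y z : Y, |y| ≤ |z| → p y ≤ p z := hlat
  have habs : |x| ≤ |y| + |z| :=
    sup_le ((hxy.trans (le_abs_self y)).trans (le_add_of_nonneg_right (abs_nonneg z)))
      (((neg_le.mp hzx).trans (le_abs_self z)).trans (le_add_of_nonneg_left (abs_nonneg y)))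
  have hp_abs : ∀ w : Y, p |w| ≤ p w := fun w => hmono _ _ (abs_abs w).le
  calc p x ≤ p (|y| + |z|) :=
        hmono _ _ (by rwa [abs_of_nonneg (add_nonneg (abs_nonneg y) (abs_nonneg z))])
    _ ≤ p |y| + p |z| := hadd _ _
    _ ≤ p y + p z := add_le_add (hp_abs y) (hp_abs z)

end LatticeSeminorm

section KConvex

variable {X Y : Type*} [AddCommGroup X] [Module ℝ X] [AddCommGroup Y] [Module ℝ Y]

/-- `S` is `K`-convex iff `IsKConvex ι (S t) (K t)` for all `t ≥ 0`. -/
def IsKConvex [Preorder Y] (ι : X →ₗ[ℝ] Y) (T : X → X) (k : X → Y) : Prop :=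
  ∀ u v : X, ∀ l : ℝ, l ∈ Set.Icc (0 : ℝ) 1 →
    ι (T (l • u + (1 - l) • v)) ≤ l • ι (T u) + (1 - l) • k v

variable {ι : X →ₗ[ℝ] Y} {T : X → X} {k : X → Y}

lemma IsKConvex.apply_le [Preorder Y] (hT : IsKConvex ι T k) (v : X) : ι (T v) ≤ k v := by
  simpa using hT 0 v 0 ⟨le_rfl, zero_le_one⟩

lemma IsKConvex.neg_le_apply [Preorder Y] [CovariantClass Y Y (· + ·) (· ≤ ·)]
    [PosSMulMono ℝ Y] (hT : IsKConvex ι T k) (hT0 : 0 ≤ ι (T 0)) (v : X) :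
    -k (-v) ≤ ι (T v) := by
  have hmid : (1 / 2 : ℝ) • v + (1 - 1 / 2 : ℝ) • (-v) = 0 := by module
  have hhalf := hT v (-v) (1 / 2) ⟨by norm_num, by norm_num⟩
  rw [hmid] at hhalf
  have hsum : 0 ≤ ι (T v) + k (-v) := by
    have := smul_nonneg (zero_le_two : (0 : ℝ) ≤ 2) (hT0.trans hhalf)
    rwa [smul_add, smul_smul, smul_smul, show (2 : ℝ) * (1 / 2) = 1 by norm_num,
      show (2 : ℝ) * (1 - 1 / 2) = 1 by norm_num, one_smul, one_smul] at this
  exact neg_le_iff_add_nonneg'.mpr (by rwa [add_comm] at hsum)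

lemma IsKConvex.apply_sub_le [Lattice Y] [CovariantClass Y Y (· + ·) (· ≤ ·)]
    [PosSMulMono ℝ Y] (hT : IsKConvex ι T k) (hT0 : 0 ≤ ι (T 0)) (p : Y → ℝ)
    (hadd : ∀ y z : Y, p (y + z) ≤ p y + p z)
    (hlat : ∀ y z : Y, y ⊔ (-y) ≤ z ⊔ (-z) → p y ≤ p z) (v : X) :
    p (ι (T v) - ι v) ≤ p (k v - ι v) + p (k (-v) - ι (-v)) := by
  refine apply_le_add_of_neg_le_of_le p hadd hlat (sub_le_sub_right (hT.apply_le v) _) ?_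
  calc -(k (-v) - ι (-v)) = -k (-v) - ι v := by rw [map_neg]; abel
    _ ≤ ι (T v) - ι v := sub_le_sub_right (hT.neg_le_apply hT0 v) _

end KConvex

theorem trajectory_right_continuity_of_K_convex_general {X Y : Type*}
    [Lattice X] [AddCommGroup X] [Module ℝ X]
    [TopologicalSpace X]
    [Lattice Y] [AddCommGroup Y] [Module ℝ Y]
    [CovariantClass Y Y (· + ·) (· ≤ ·)] [PosSMulMono ℝ Y]
    (ι : X →ₗ[ℝ] Y)
    (hι_order : ∀ u v : X, u ≤ v ↔ ι u ≤ ι v)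
    (P : Set (Y → ℝ))
    (hP_nonneg : ∀ p ∈ P, ∀ y : Y, 0 ≤ p y)
    (hP_add : ∀ p ∈ P, ∀ y z : Y, p (y + z) ≤ p y + p z)
    (hP_lattice : ∀ p ∈ P, ∀ y z : Y, y ⊔ (-y) ≤ z ⊔ (-z) → p y ≤ p z)
    (S : ℝ → X → X) (K : ℝ → X → Y)
    (hSsem : ∀ s t : ℝ, 0 ≤ s → 0 ≤ t → ∀ u : X, S t (S s u) = S (t + s) u)
    (hKconv : ∀ t : ℝ, 0 ≤ t → ∀ u v : X, ∀ l : ℝ, l ∈ Set.Icc (0 : ℝ) 1 →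
      ι (S t (l • u + (1 - l) • v)) ≤ l • ι (S t u) + (1 - l) • K t v)
    (hSpos : ∀ t : ℝ, 0 ≤ t → 0 ≤ S t 0)
    (hKrc : ∀ p ∈ P, ∀ t : ℕ → ℝ, (∀ n, 0 < t n) → Tendsto t atTop (𝓝 0) →
      ∀ (u : ℕ → X) (u₀ : X), Tendsto u atTop (𝓝 u₀) →
        Tendsto (fun n => p (K (t n) (u n) - ι u₀)) atTop (𝓝 0)) :
    ∀ (u₀ : X) (t : ℝ), 0 ≤ t → ∀ p ∈ P, ∀ h : ℕ → ℝ,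
      (∀ n, 0 < h n) → Tendsto h atTop (𝓝 0) →
      Tendsto (fun n => p (ι (S (t + h n) u₀) - ι (S t u₀))) atTop (𝓝 0) := by
  intro u₀ t ht p hp h hpos hlim
  set v := S t u₀
  have hbound : ∀ n, p (ι (S (t + h n) u₀) - ι v) ≤
      p (K (h n) v - ι v) + p (K (h n) (-v) - ι (-v)) := fun n => by
    have hS0 : 0 ≤ ι (S (h n) 0) := by
      simpa using (hι_order 0 _).mp (hSpos (h n) (hpos n).le)
    rw [add_comm, ← hSsem t (h n) ht (hpos n).le]
    exact IsKConvex.apply_sub_le (hKconv (h n) (hpos n).le) hS0 p (hP_add p hp)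
      (hP_lattice p hp) v
  have hKv := hKrc p hp h hpos hlim (fun _ => v) v tendsto_const_nhds
  have hKnegv := hKrc p hp h hpos hlim (fun _ => -v) (-v) tendsto_const_nhds
  exact squeeze_zero (fun n => hP_nonneg p hp _) hbound (by simpa using hKv.add hKnegv)

/-- Let `S` be a `K`-convex monotone semigroup on a vector sublattice
`X ⊆ Y` (encoded via a linear lattice-order embedding `ι : X →ₗ[ℝ] Y`) with `S(t)0 ≥ 0`
for all `t ≥ 0`, `X` a topological vector space, `P` a family of lattice seminorms on `Y`,
and `K` strongly right-continuous w.r.t. `P`. Then for every `u₀ ∈ X`, `t ≥ 0`, `p ∈ P`,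
and every sequence `h_n > 0` with `h_n → 0`, one has `p(S(t + h_n)u₀ − S(t)u₀) → 0`;
i.e., the trajectory `s ↦ S(s)u₀` is right-continuous w.r.t. the seminorms in `P`. -/
theorem trajectory_right_continuity_of_K_convex {X Y : Type*}
    [Lattice X] [AddCommGroup X] [Module ℝ X]
    [CovariantClass X X (· + ·) (· ≤ ·)] [PosSMulMono ℝ X]
    [TopologicalSpace X] [IsTopologicalAddGroup X] [ContinuousSMul ℝ X]
    [Lattice Y] [AddCommGroup Y] [Module ℝ Y]
    [CovariantClass Y Y (· + ·) (· ≤ ·)] [PosSMulMono ℝ Y]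
    (ι : X →ₗ[ℝ] Y)
    (hι_order : ∀ u v : X, u ≤ v ↔ ι u ≤ ι v)
    (hι_sup : ∀ u v : X, ι (u ⊔ v) = ι u ⊔ ι v)
    (P : Set (Y → ℝ))
    (hP_nonneg : ∀ p ∈ P, ∀ y : Y, 0 ≤ p y)
    (hP_add : ∀ p ∈ P, ∀ y z : Y, p (y + z) ≤ p y + p z)
    (hP_smul : ∀ p ∈ P, ∀ (r : ℝ) (y : Y), p (r • y) = |r| * p y)
    (hP_lattice : ∀ p ∈ P, ∀ y z : Y, y ⊔ (-y) ≤ z ⊔ (-z) → p y ≤ p z)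
    (S : ℝ → X → X) (K : ℝ → X → Y)
    (hS0 : ∀ u : X, S 0 u = u)
    (hSsem : ∀ s t : ℝ, 0 ≤ s → 0 ≤ t → ∀ u : X, S t (S s u) = S (t + s) u)
    (hSmono : ∀ t : ℝ, 0 ≤ t → ∀ u v : X, u ≤ v → S t u ≤ S t v)
    (hKconv : ∀ t : ℝ, 0 ≤ t → ∀ u v : X, ∀ l : ℝ, l ∈ Set.Icc (0 : ℝ) 1 →
      ι (S t (l • u + (1 - l) • v)) ≤ l • ι (S t u) + (1 - l) • K t v)
    (hSpos : ∀ t : ℝ, 0 ≤ t → 0 ≤ S t 0)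
    (hKrc : ∀ p ∈ P, ∀ t : ℕ → ℝ, (∀ n, 0 < t n) → Tendsto t atTop (𝓝 0) →
      ∀ (u : ℕ → X) (u₀ : X), Tendsto u atTop (𝓝 u₀) →
        Tendsto (fun n => p (K (t n) (u n) - ι u₀)) atTop (𝓝 0)) :
    ∀ (u₀ : X) (t : ℝ), 0 ≤ t → ∀ p ∈ P, ∀ h : ℕ → ℝ,
      (∀ n, 0 < h n) → Tendsto h atTop (𝓝 0) →
      Tendsto (fun n => p (ι (S (t + h n) u₀) - ι (S t u₀))) atTop (𝓝 0) :=
  trajectory_right_continuity_of_K_convex_general ι hι_order P hP_nonneg hP_add hP_lattice S K hSsem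
    hKconv hSpos hKrc
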